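/- arXiv:1312.3870 — 4 statements merged into one kernel-verified Lean document; each statement's English description precedes it below -/
import Mathlib

section
/- Let h: ℝ × ℝ → ℝ be a symmetric kernel that is Lipschitz continuous with constant L in each variable, and suppose h admits a representation h(x,y) = ∑_{l=1}^∞ λ_l Φ_l(x) Φ_l(y) with λ_l ≥ 0 and ∑ λ_l |Φ_l(x)|² < ∞ for all x. Let H be the Hilbert space of real sequences y = (y_l) with ∑ λ_l y_l² < ∞ and inner product ⟨y,z⟩ = ∑ λ_l y_l z_l. Then the map x ↦ (Φ_l(x))_{l∈ℕ} from ℝ into H is 1/2-Hölder continuous: ‖(Φ_l(x)) − (Φ_l(y))‖ ≤ √(2L|x−y|) for all x,y. -/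
open scoped BigOperators

/-- Lemma 1 (1/2-Hölder continuity of the eigenfunction embedding): if `h` is a
symmetric kernel, Lipschitz with constant `L` in each variable, with representation
`h x y = ∑ l, lam l * Φ l x * Φ l y`, then the map `x ↦ (Φ l x)_l` into the weighted
`ℓ²` space with weights `lam` is `1/2`-Hölder continuous. -/
theorem stmt_0 (h : ℝ → ℝ → ℝ) (L : ℝ) (hL : 0 ≤ L)
    (lam : ℕ → ℝ) (Φ : ℕ → ℝ → ℝ)
    (hsym : ∀ x y, h x y = h y x)
    (hlip : ∀ x y y', |h x y - h x y'| ≤ L * |y - y'|)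
    (hlam : ∀ l, 0 ≤ lam l)
    (hsum : ∀ x, Summable (fun l => lam l * (Φ l x) ^ 2))
    (hrep : ∀ x y, h x y = ∑' l, lam l * Φ l x * Φ l y) :
    ∀ x y, Real.sqrt (∑' l, lam l * (Φ l x - Φ l y) ^ 2) ≤ Real.sqrt (2 * L * |x - y|) := by
  intro x y
  apply Real.sqrt_le_sqrt
  have hle : ∀ l, |lam l * Φ l x * Φ l y|
      ≤ lam l * (Φ l x) ^ 2 / 2 + lam l * (Φ l y) ^ 2 / 2 := by
    intro l
    have h1 : |Φ l x * Φ l y| ≤ ((Φ l x) ^ 2 + (Φ l y) ^ 2) / 2 := by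
      rw [abs_mul]
      nlinarith [sq_nonneg (|Φ l x| - |Φ l y|), sq_abs (Φ l x), sq_abs (Φ l y)]
    calc |lam l * Φ l x * Φ l y| = lam l * |Φ l x * Φ l y| := by
          rw [mul_assoc, abs_mul, abs_of_nonneg (hlam l)]
      _ ≤ lam l * (((Φ l x) ^ 2 + (Φ l y) ^ 2) / 2) :=
          mul_le_mul_of_nonneg_left h1 (hlam l)
      _ = lam l * (Φ l x) ^ 2 / 2 + lam l * (Φ l y) ^ 2 / 2 := by ring
  have hg : Summable (fun l => lam l * (Φ l x) ^ 2 / 2 + lam l * (Φ l y) ^ 2 / 2) :=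
    ((hsum x).div_const 2).add ((hsum y).div_const 2)
  have hab : Summable (fun l => lam l * Φ l x * Φ l y) :=
    Summable.of_abs (Summable.of_nonneg_of_le (fun l => abs_nonneg _) hle hg)
  have key : (∑' l, lam l * (Φ l x - Φ l y) ^ 2) = h x x - 2 * h x y + h y y := by
    have heq : ∀ l, lam l * (Φ l x - Φ l y) ^ 2
        = (lam l * Φ l x * Φ l x + lam l * Φ l y * Φ l y) - 2 * (lam l * Φ l x * Φ l y) := by
      intro l; ring
    have hxx : (fun l => lam l * Φ l x * Φ l x) = fun l => lam l * (Φ l x) ^ 2 := by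
      funext l; ring
    have hyy : (fun l => lam l * Φ l y * Φ l y) = fun l => lam l * (Φ l y) ^ 2 := by
      funext l; ring
    have sx : Summable (fun l => lam l * Φ l x * Φ l x) := by rw [hxx]; exact hsum x
    have sy : Summable (fun l => lam l * Φ l y * Φ l y) := by rw [hyy]; exact hsum y
    calc (∑' l, lam l * (Φ l x - Φ l y) ^ 2)
        = ∑' l, ((lam l * Φ l x * Φ l x + lam l * Φ l y * Φ l y)
            - 2 * (lam l * Φ l x * Φ l y)) := by
          exact tsum_congr heq
      _ = (∑' l, (lam l * Φ l x * Φ l x + lam l * Φ l y * Φ l y))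
            - ∑' l, 2 * (lam l * Φ l x * Φ l y) :=
          Summable.tsum_sub (sx.add sy) (hab.mul_left 2)
      _ = (∑' l, lam l * Φ l x * Φ l x) + (∑' l, lam l * Φ l y * Φ l y)
            - 2 * ∑' l, lam l * Φ l x * Φ l y := by
          rw [Summable.tsum_add sx sy, tsum_mul_left]
      _ = h x x - 2 * h x y + h y y := by
          rw [← hrep x x, ← hrep y y, ← hrep x y]; ring
  rw [key]
  have h1 := abs_le.mp (hlip x x y)
  have h2 := abs_le.mp (hlip y y x)
  have h3 : h y x = h x y := hsym y x
  have h4 : |y - x| = |x - y| := abs_sub_comm y x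
  linarith [h1.2, h2.2, h3 ▸ h4 ▸ h2.2]
end

section
/- Let (X_n)_{n∈ℕ} be a stationary sequence of random variables with values in a separable Hilbert space H such that EX_1 = 0, E‖X_1‖² < ∞, and E‖X_1 + ⋯ + X_n‖² ≤ C·n for all n and some constant C > 0. Then almost surely, (1/(√n · log²n)) · ‖X_1 + ⋯ + X_n‖ → 0 as n → ∞. -/
/-!
Split `[0, n)`, `n < 2 ^ K`, along the binary expansion of `n`: this uses at most one aligned
dyadic block of each length `2 ^ j`, `j < K`, so by Cauchy–Schwarz `‖S_n‖²` is at most `K` times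
the sum `Q_K` of the squared norms of all aligned dyadic blocks in `[0, 2 ^ K)`
(Rademacher–Menchoff). Stationarity turns `E‖S_n‖² ≤ C n` into `E‖B‖² ≤ C |B|` for every block
`B`, hence `E Q_K ≤ K C 2 ^ K`. The normalized quantities `K Q_K / (2 ^ K K⁴)` therefore have
summable expectations, so they tend to `0` almost surely, and up to a constant they bound
`‖S_n‖² / (n log⁴ n)` for `2 ^ (K - 1) ≤ n < 2 ^ K`.
-/

open MeasureTheory Filter Topology Finset
open scoped ENNReal

section Dyadic

variable {E : Type*} [SeminormedAddCommGroup E] (f : ℕ → E)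

def dyadicBlockSum (j r : ℕ) : E :=
  ∑ i ∈ Ico (r * 2 ^ j) ((r + 1) * 2 ^ j), f i

def dyadicSquareSum (K : ℕ) : ℝ :=
  ∑ j ∈ range K, ∑ r ∈ range (2 ^ (K - j)), ‖dyadicBlockSum f j r‖ ^ 2

variable {f}

theorem norm_sum_Ico_le_sum_of_dyadicBlockSum_le {M : ℕ → ℝ} (hM0 : ∀ j, 0 ≤ M j) {N : ℕ}
    (hM : ∀ j r, (r + 1) * 2 ^ j ≤ N → ‖dyadicBlockSum f j r‖ ≤ M j) :
    ∀ {k a n : ℕ}, 2 ^ k ∣ a → n < 2 ^ k → a + n ≤ N →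
      ‖∑ i ∈ Ico a (a + n), f i‖ ≤ ∑ j ∈ range k, M j := by
  intro k
  induction k with
  | zero =>
    intro a n _ hn _
    simp [show n = 0 by omega]
  | succ k ih =>
    intro a n ha hn hN
    obtain ⟨r, rfl⟩ := dvd_trans (pow_dvd_pow 2 k.le_succ) ha
    have hr : r * 2 ^ k = 2 ^ k * r := mul_comm _ _
    have ha' : 2 ^ k ∣ 2 ^ k * r + 2 ^ k := dvd_add (dvd_mul_right _ _) dvd_rfl
    rw [sum_range_succ]
    by_cases hnk : n < 2 ^ k
    · exact (ih (dvd_mul_right _ _) hnk hN).trans (le_add_of_nonneg_right (hM0 k))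
    · have hblock : ‖∑ i ∈ Ico (2 ^ k * r) (2 ^ k * r + 2 ^ k), f i‖ ≤ M k := by
        have := hM k r (by rw [add_mul, one_mul, hr]; omega)
        rwa [dyadicBlockSum, add_mul, one_mul, hr] at this
      have htail := ih ha' (n := n - 2 ^ k) (by rw [pow_succ] at hn; omega) (by omega)
      rw [add_assoc, Nat.add_sub_cancel' (not_lt.mp hnk)] at htail
      rw [← sum_Ico_consecutive _ (Nat.le_add_right _ (2 ^ k)) (by omega)]
      refine (norm_add_le _ _).trans ?_
      linarith

theorem norm_sum_range_sq_le_mul_dyadicSquareSum {K n : ℕ} (hn : n < 2 ^ K) :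
    ‖∑ i ∈ range n, f i‖ ^ 2 ≤ K * dyadicSquareSum f K := by
  set M : ℕ → ℝ := fun j => √(∑ r ∈ range (2 ^ (K - j)), ‖dyadicBlockSum f j r‖ ^ 2)
  have hM : ∀ j r, (r + 1) * 2 ^ j ≤ n → ‖dyadicBlockSum f j r‖ ≤ M j := by
    intro j r hr
    have hjK : j ≤ K := by
      have : 2 ^ j < 2 ^ K := by nlinarith [Nat.one_le_two_pow (n := j)]
      exact (Nat.pow_lt_pow_iff_right one_lt_two |>.mp this).le
    have hrK : r < 2 ^ (K - j) := by
      have : (r + 1) * 2 ^ j < 2 ^ (K - j) * 2 ^ j := by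
        rw [← pow_add, Nat.sub_add_cancel hjK]; omega
      have := Nat.lt_of_mul_lt_mul_right this
      omega
    exact Real.le_sqrt_of_sq_le (single_le_sum (fun r _ => sq_nonneg ‖dyadicBlockSum f j r‖)
      (mem_range.mpr hrK))
  have hchain : ‖∑ i ∈ range n, f i‖ ≤ ∑ j ∈ range K, M j := by
    simpa using norm_sum_Ico_le_sum_of_dyadicBlockSum_le (fun j => Real.sqrt_nonneg _) hM
      (dvd_zero (2 ^ K)) hn (zero_add n).le
  calc ‖∑ i ∈ range n, f i‖ ^ 2 ≤ (∑ j ∈ range K, M j) ^ 2 := by gcongr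
    _ ≤ K * ∑ j ∈ range K, M j ^ 2 := by
      simpa using sq_sum_le_card_mul_sum_sq (s := range K) (f := M)
    _ = K * dyadicSquareSum f K := by
      simp only [M, Real.sq_sqrt (sum_nonneg fun r _ => sq_nonneg _), dyadicSquareSum]

/-- For `2 ^ (K + 1) ≤ n < 2 ^ (K + 2)` this bounds `‖f 0 + ⋯ + f (n - 1)‖² / (n (log n)⁴)`,
up to the factor `(log 2)⁴`. -/
noncomputable def normalizedDyadicSquareSum (f : ℕ → E) (K : ℕ) : ℝ :=
  (K + 2) * dyadicSquareSum f (K + 2) / (2 ^ (K + 1) * (K + 1) ^ 4)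

theorem sq_norm_sum_range_div_le_normalizedDyadicSquareSum {n : ℕ} (hn : 2 ≤ n) :
    (‖∑ i ∈ range n, f i‖ / (√n * Real.log n ^ 2)) ^ 2 ≤
      normalizedDyadicSquareSum f (Nat.log 2 n - 1) / Real.log 2 ^ 4 := by
  set K := Nat.log 2 n - 1
  have hK : K + 1 = Nat.log 2 n := by
    have := Nat.log_pos one_lt_two hn
    omega
  have hlow : 2 ^ (K + 1) ≤ n := hK ▸ Nat.pow_log_le_self 2 (by omega)
  have hup : n < 2 ^ (K + 1 + 1) := hK ▸ Nat.lt_pow_succ_log_self one_lt_two n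
  have hlow' : (2 : ℝ) ^ (K + 1) ≤ n := by exact_mod_cast hlow
  have hlog : (K + 1) * Real.log 2 ≤ Real.log n := by
    calc (K + 1) * Real.log 2 = Real.log (2 ^ (K + 1)) := by rw [Real.log_pow]; push_cast; ring
      _ ≤ Real.log n := Real.log_le_log (by positivity) hlow'
  have hS := norm_sum_range_sq_le_mul_dyadicSquareSum (f := f) hup
  have hQ : 0 ≤ dyadicSquareSum f (K + 2) :=
    sum_nonneg fun j _ => sum_nonneg fun r _ => sq_nonneg _
  calc (‖∑ i ∈ range n, f i‖ / (√n * Real.log n ^ 2)) ^ 2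
      = ‖∑ i ∈ range n, f i‖ ^ 2 / (n * Real.log n ^ 4) := by
        rw [div_pow, mul_pow, Real.sq_sqrt (Nat.cast_nonneg n), ← pow_mul]
    _ ≤ ((K + 2 : ℕ) : ℝ) * dyadicSquareSum f (K + 2) /
          (2 ^ (K + 1) * ((K + 1) * Real.log 2) ^ 4) := by
        gcongr
    _ = normalizedDyadicSquareSum f K / Real.log 2 ^ 4 := by
        rw [normalizedDyadicSquareSum]
        push_cast
        field_simp

end Dyadic

section Probability

variable {Ω : Type*} [MeasurableSpace Ω] {μ : Measure Ω}

theorem ae_tendsto_zero_of_tsum_lintegral_ne_top {Y : ℕ → Ω → ℝ≥0∞}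
    (hY : ∀ K, AEMeasurable (Y K) μ) (h : ∑' K, ∫⁻ ω, Y K ω ∂μ ≠ ∞) :
    ∀ᵐ ω ∂μ, Tendsto (Y · ω) atTop (𝓝 0) := by
  have hfin : ∀ᵐ ω ∂μ, ∑' K, Y K ω < ∞ :=
    ae_lt_top' (AEMeasurable.tsum hY) (by rwa [lintegral_tsum hY])
  filter_upwards [hfin] with ω hω using ENNReal.tendsto_atTop_zero_of_tsum_ne_top hω.ne

variable {E : Type*} [NormedAddCommGroup E] [MeasurableSpace E] [BorelSpace E]
  [SecondCountableTopology E] {X : ℕ → Ω → E}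

theorem lintegral_enorm_sum_Ico_sq_eq_of_map_eq (hX : ∀ i, Measurable (X i)) {s n : ℕ}
    (h : μ.map (fun ω => fun i : Fin n => X (s + i) ω) = μ.map (fun ω => fun i : Fin n => X i ω)) :
    ∫⁻ ω, ‖∑ i ∈ Ico s (s + n), X i ω‖ₑ ^ 2 ∂μ = ∫⁻ ω, ‖∑ i ∈ range n, X i ω‖ₑ ^ 2 ∂μ := by
  have hg : Measurable fun v : Fin n → E => ‖∑ i, v i‖ₑ ^ 2 := by fun_prop
  have key := congrArg (fun ν => ∫⁻ v, ‖∑ i, v i‖ₑ ^ 2 ∂ν) h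
  rw [lintegral_map hg (measurable_pi_lambda _ fun i => hX _),
    lintegral_map hg (measurable_pi_lambda _ fun i => hX _)] at key
  convert key using 4 with ω ω
  · rw [sum_Ico_eq_sum_range, add_tsub_cancel_left, ← Fin.sum_univ_eq_sum_range]
  · rw [← Fin.sum_univ_eq_sum_range]

theorem measurable_dyadicSquareSum (hX : ∀ i, Measurable (X i)) (K : ℕ) :
    Measurable fun ω => dyadicSquareSum (X · ω) K :=
  Finset.measurable_sum _ fun _ _ => Finset.measurable_sum _ fun _ _ =>
    (Finset.measurable_sum _ fun i _ => hX i).norm.pow_const 2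

variable {C : ℝ}

theorem lintegral_dyadicSquareSum_le (hX : ∀ i, Measurable (X i))
    (hblock : ∀ s n : ℕ, ∫⁻ ω, ‖∑ i ∈ Ico s (s + n), X i ω‖ₑ ^ 2 ∂μ ≤ ENNReal.ofReal (C * n))
    (K : ℕ) :
    ∫⁻ ω, ENNReal.ofReal (dyadicSquareSum (X · ω) K) ∂μ ≤ ENNReal.ofReal (K * (C * 2 ^ K)) := by
  have hB : ∀ j r, Measurable fun ω => ‖dyadicBlockSum (X · ω) j r‖ₑ ^ 2 := fun _ _ =>
    (Finset.measurable_sum _ fun i _ => hX i).enorm.pow_const 2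
  calc ∫⁻ ω, ENNReal.ofReal (dyadicSquareSum (X · ω) K) ∂μ
      = ∑ j ∈ range K, ∑ r ∈ range (2 ^ (K - j)),
          ∫⁻ ω, ‖dyadicBlockSum (X · ω) j r‖ₑ ^ 2 ∂μ := by
        simp_rw [dyadicSquareSum, ENNReal.ofReal_sum_of_nonneg (fun _ _ => sum_nonneg
          fun _ _ => sq_nonneg _), ENNReal.ofReal_sum_of_nonneg (fun _ _ => sq_nonneg _),
          ENNReal.ofReal_pow (norm_nonneg _), ofReal_norm]
        rw [lintegral_finsetSum _ fun j _ => Finset.measurable_sum _ fun r _ => hB j r]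
        exact sum_congr rfl fun j _ => lintegral_finsetSum _ fun r _ => hB j r
    _ ≤ ∑ j ∈ range K, ∑ r ∈ range (2 ^ (K - j)), ENNReal.ofReal (C * 2 ^ j) := by
        gcongr with j _ r
        simpa [dyadicBlockSum, add_mul] using hblock (r * 2 ^ j) (2 ^ j)
    _ = ∑ j ∈ range K, ENNReal.ofReal (C * 2 ^ K) := by
        refine sum_congr rfl fun j hj => ?_
        rw [sum_const, card_range, nsmul_eq_mul, ← ENNReal.ofReal_natCast,
          ← ENNReal.ofReal_mul (by positivity), Nat.cast_pow, Nat.cast_ofNat, mul_left_comm,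
          ← pow_add, Nat.sub_add_cancel (mem_range.mp hj).le]
    _ = ENNReal.ofReal (K * (C * 2 ^ K)) := by
        rw [sum_const, card_range, nsmul_eq_mul, ← ENNReal.ofReal_natCast,
          ← ENNReal.ofReal_mul (Nat.cast_nonneg K)]

theorem lintegral_normalizedDyadicSquareSum_le (hX : ∀ i, Measurable (X i)) (hC : 0 ≤ C)
    (hblock : ∀ s n : ℕ, ∫⁻ ω, ‖∑ i ∈ Ico s (s + n), X i ω‖ₑ ^ 2 ∂μ ≤ ENNReal.ofReal (C * n))
    (K : ℕ) :
    ∫⁻ ω, ENNReal.ofReal (normalizedDyadicSquareSum (X · ω) K) ∂μ ≤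
      ENNReal.ofReal (8 * C / (K + 1) ^ 2) := by
  set c : ℝ := (K + 2) / (2 ^ (K + 1) * (K + 1) ^ 4)
  have hc : 0 ≤ c := by positivity
  have hnorm : ∀ ω, normalizedDyadicSquareSum (X · ω) K = c * dyadicSquareSum (X · ω) (K + 2) :=
    fun ω => mul_div_right_comm _ _ _
  have hconst : c * ((K + 2) * (C * 2 ^ (K + 2))) = 2 * C * (K + 2) ^ 2 / (K + 1) ^ 4 := by
    simp only [c, pow_succ]
    field_simp
  calc ∫⁻ ω, ENNReal.ofReal (normalizedDyadicSquareSum (X · ω) K) ∂μ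
      = ENNReal.ofReal c * ∫⁻ ω, ENNReal.ofReal (dyadicSquareSum (X · ω) (K + 2)) ∂μ := by
        simp_rw [hnorm, ENNReal.ofReal_mul hc]
        exact lintegral_const_mul _ (measurable_dyadicSquareSum hX _).ennreal_ofReal
    _ ≤ ENNReal.ofReal c * ENNReal.ofReal ((K + 2) * (C * 2 ^ (K + 2))) := by
        gcongr
        exact_mod_cast lintegral_dyadicSquareSum_le hX hblock (K + 2)
    _ ≤ ENNReal.ofReal (8 * C / (K + 1) ^ 2) := by
        rw [← ENNReal.ofReal_mul hc, hconst]
        refine ENNReal.ofReal_le_ofReal ?_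
        rw [div_le_div_iff₀ (by positivity) (by positivity)]
        have : ((K : ℝ) + 2) ^ 2 ≤ 4 * (K + 1) ^ 2 := by nlinarith
        nlinarith [mul_le_mul_of_nonneg_left this (by positivity : 0 ≤ 2 * C * (K + 1) ^ 2)]

theorem ae_tendsto_normalizedDyadicSquareSum (hX : ∀ i, Measurable (X i)) (hC : 0 ≤ C)
    (hblock : ∀ s n : ℕ, ∫⁻ ω, ‖∑ i ∈ Ico s (s + n), X i ω‖ₑ ^ 2 ∂μ ≤ ENNReal.ofReal (C * n)) :
    ∀ᵐ ω ∂μ, Tendsto (fun K => normalizedDyadicSquareSum (X · ω) K) atTop (𝓝 0) := by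
  have hnonneg : ∀ K ω, 0 ≤ normalizedDyadicSquareSum (X · ω) K := fun K ω =>
    div_nonneg (mul_nonneg (by positivity)
      (sum_nonneg fun _ _ => sum_nonneg fun _ _ => sq_nonneg _)) (by positivity)
  have hmeas : ∀ K, Measurable fun ω => normalizedDyadicSquareSum (X · ω) K := fun K =>
    ((measurable_dyadicSquareSum hX (K + 2)).const_mul _).div_const _
  have hsum : Summable fun K : ℕ => 8 * C / ((K : ℝ) + 1) ^ 2 := by
    have := (summable_nat_add_iff 1).mpr (Real.summable_one_div_nat_pow.mpr one_lt_two)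
    exact (this.mul_left (8 * C)).congr fun K => by push_cast; ring
  have htsum : ∑' K, ∫⁻ ω, ENNReal.ofReal (normalizedDyadicSquareSum (X · ω) K) ∂μ ≠ ∞ := by
    refine ne_top_of_le_ne_top ?_
      (ENNReal.tsum_le_tsum (lintegral_normalizedDyadicSquareSum_le hX hC hblock))
    rw [← ENNReal.ofReal_tsum_of_nonneg (fun K => by positivity) hsum]
    exact ENNReal.ofReal_ne_top
  filter_upwards [ae_tendsto_zero_of_tsum_lintegral_ne_top
    (fun K => (hmeas K).ennreal_ofReal.aemeasurable) htsum] with ω hω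
  exact ((ENNReal.tendsto_toReal ENNReal.zero_ne_top).comp hω).congr fun K =>
    ENNReal.toReal_ofReal (hnonneg K ω)

theorem ae_tendsto_norm_sum_range_div_sqrt_mul_log_sq (hX : ∀ i, Measurable (X i)) (hC : 0 ≤ C)
    (hblock : ∀ s n : ℕ, ∫⁻ ω, ‖∑ i ∈ Ico s (s + n), X i ω‖ₑ ^ 2 ∂μ ≤ ENNReal.ofReal (C * n)) :
    ∀ᵐ ω ∂μ, Tendsto (fun n : ℕ => ‖∑ i ∈ range n, X i ω‖ / (√n * Real.log n ^ 2))
      atTop (𝓝 0) := by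
  have hlog : Tendsto (fun n => Nat.log 2 n - 1) atTop atTop :=
    tendsto_atTop_atTop.mpr fun K => ⟨2 ^ (K + 1), fun n hn => by
      have := Nat.le_log_of_pow_le one_lt_two hn
      omega⟩
  filter_upwards [ae_tendsto_normalizedDyadicSquareSum hX hC hblock] with ω hω
  have hmajorant : Tendsto (fun n => √(normalizedDyadicSquareSum (X · ω) (Nat.log 2 n - 1) /
      Real.log 2 ^ 4)) atTop (𝓝 0) := by
    simpa using ((hω.comp hlog).div_const _).sqrt
  refine squeeze_zero' (Eventually.of_forall fun n => by positivity) ?_ hmajorant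
  filter_upwards [eventually_ge_atTop 2] with n hn
  exact Real.le_sqrt_of_sq_le (sq_norm_sum_range_div_le_normalizedDyadicSquareSum hn)

end Probability

theorem stmt_4_general
    {H : Type*} [NormedAddCommGroup H]
    [SecondCountableTopology H] [MeasurableSpace H] [BorelSpace H]
    {Ω : Type*} [MeasurableSpace Ω] (μ : Measure Ω)
    (X : ℕ → Ω → H) (hmeas : ∀ i, Measurable (X i))
    (hstat : ∀ (k n : ℕ), μ.map (fun ω => fun i : Fin n => X (k + i) ω)
        = μ.map (fun ω => fun i : Fin n => X i ω))
    (C : ℝ) (hC : 0 < C)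
    (hbound : ∀ n : ℕ, ∫⁻ ω, (‖∑ i ∈ Finset.range n, X i ω‖₊ : ℝ≥0∞) ^ 2 ∂μ
        ≤ ENNReal.ofReal (C * n)) :
    ∀ᵐ ω ∂μ, Tendsto
      (fun n : ℕ => ‖∑ i ∈ Finset.range n, X i ω‖ / (Real.sqrt n * (Real.log n) ^ 2))
      atTop (𝓝 0) := by
  refine ae_tendsto_norm_sum_range_div_sqrt_mul_log_sq hmeas hC.le fun s n => ?_
  rw [lintegral_enorm_sum_Ico_sq_eq_of_map_eq hmeas (hstat s n)]
  simpa only [enorm_eq_nnnorm] using hbound n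

/-- Lemma 5 (strong law of large numbers with rate in Hilbert space): if `(X n)` is a
stationary, centered, square-integrable Hilbert space-valued sequence with
`E‖X_1 + ⋯ + X_n‖² ≤ C n` for all `n`, then almost surely
`‖X_1 + ⋯ + X_n‖ / (√n (log n)²) → 0`. -/
theorem stmt_4
    {H : Type*} [NormedAddCommGroup H] [InnerProductSpace ℝ H] [CompleteSpace H]
    [SecondCountableTopology H] [MeasurableSpace H] [BorelSpace H]
    {Ω : Type*} [MeasurableSpace Ω] (μ : Measure Ω) [IsProbabilityMeasure μ]
    (X : ℕ → Ω → H) (hmeas : ∀ i, Measurable (X i))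
    (hstat : ∀ (k n : ℕ), μ.map (fun ω => fun i : Fin n => X (k + i) ω)
        = μ.map (fun ω => fun i : Fin n => X i ω))
    (hcent : (∫ ω, X 0 ω ∂μ) = 0)
    (hsq : (∫⁻ ω, (‖X 0 ω‖₊ : ℝ≥0∞) ^ 2 ∂μ) < ⊤)
    (C : ℝ) (hC : 0 < C)
    (hbound : ∀ n : ℕ, ∫⁻ ω, (‖∑ i ∈ Finset.range n, X i ω‖₊ : ℝ≥0∞) ^ 2 ∂μ
        ≤ ENNReal.ofReal (C * n)) :
    ∀ᵐ ω ∂μ, Tendsto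
      (fun n : ℕ => ‖∑ i ∈ Finset.range n, X i ω‖ / (Real.sqrt n * (Real.log n) ^ 2))
      atTop (𝓝 0) :=
  stmt_4_general μ X hmeas hstat C hC hbound
end

section
/- Let X be a separable metric space. Then there exists a countable family (g_i)_{i∈ℕ} of bounded uniformly continuous real-valued functions on X such that for any sequence of Borel probability measures (μ_n) and Borel probability measure μ on X: μ_n converges weakly to μ if and only if ∫ g_i dμ_n → ∫ g_i dμ for all i ∈ ℕ. -/
/-!
Fix a countable dense set `D`. For finitely many balls `B(c, r)` with `c ∈ D` and `r` rational,
`min 1 (∑ bumps)` is uniformly continuous, equals `1` on the union of the balls and vanishes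
outside the union of the doubled balls. Every open `G` is the union of those balls whose doubles
lie in `G`, so by continuity from below `ν G` is approximated from inside by integrals of these
countably many functions. Convergence of their integrals therefore yields
`ν G ≤ liminf μₙ G` for every open `G`, which is weak convergence by the portmanteau theorem.
-/

open MeasureTheory Filter Topology Metric Set

noncomputable section Bumps

variable {X : Type*} [PseudoMetricSpace X]

def ballBump (c : X) (r : ℝ) (x : X) : ℝ :=
  max 0 (min 1 (2 - dist x c / r))

lemma ballBump_nonneg (c : X) (r : ℝ) (x : X) : 0 ≤ ballBump c r x :=
  le_max_left _ _

lemma ballBump_eq_one {c x : X} {r : ℝ} (hx : x ∈ ball c r) : ballBump c r x = 1 := by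
  have : dist x c / r < 1 := (div_lt_one (pos_of_mem_ball hx)).2 (mem_ball.1 hx)
  simp only [ballBump, min_eq_left (by linarith : (1 : ℝ) ≤ 2 - dist x c / r)]
  exact max_eq_right zero_le_one

lemma ballBump_eq_zero {c x : X} {r : ℝ} (hr : 0 < r) (hx : x ∉ ball c (2 * r)) :
    ballBump c r x = 0 := by
  have : 2 ≤ dist x c / r := (le_div_iff₀ hr).2 (not_lt.1 hx)
  exact max_eq_left ((min_le_right _ _).trans (by linarith))

lemma uniformContinuous_ballBump (c : X) (r : ℝ) : UniformContinuous (ballBump c r) :=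
  ((LipschitzWith.id.const_min 1).const_max 0).uniformContinuous.comp <|
    uniformContinuous_const.sub ((uniformContinuous_id.dist uniformContinuous_const).div_const' r)

variable {ι : Type*} (c : ι → X) (r : ι → ℝ)

def ballBumpSum (S : Finset ι) (x : X) : ℝ :=
  min 1 (∑ i ∈ S, ballBump (c i) (r i) x)

lemma uniformContinuous_ballBumpSum (S : Finset ι) : UniformContinuous (ballBumpSum c r S) := by
  have hsum : UniformContinuous fun x => ∑ i ∈ S, ballBump (c i) (r i) x := by
    classical
    induction S using Finset.induction_on with
    | empty => simpa using uniformContinuous_const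
    | insert i S hi ih =>
      simpa only [Finset.sum_insert hi] using (uniformContinuous_ballBump (c i) (r i)).add ih
  exact (LipschitzWith.id.const_min 1).uniformContinuous.comp hsum

lemma ballBumpSum_nonneg (S : Finset ι) (x : X) : 0 ≤ ballBumpSum c r S x :=
  le_min zero_le_one (Finset.sum_nonneg fun _ _ => ballBump_nonneg _ _ x)

lemma abs_ballBumpSum_le_one (S : Finset ι) (x : X) : |ballBumpSum c r S x| ≤ 1 :=
  abs_le.2 ⟨by linarith [ballBumpSum_nonneg c r S x], min_le_left _ _⟩

lemma indicator_le_ballBumpSum (S : Finset ι) :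
    (⋃ i ∈ S, ball (c i) (r i)).indicator 1 ≤ ballBumpSum c r S := by
  intro x
  by_cases hx : x ∈ ⋃ i ∈ S, ball (c i) (r i)
  · obtain ⟨i, hi, hxi⟩ := mem_iUnion₂.1 hx
    rw [indicator_of_mem hx]
    refine le_min le_rfl ?_
    calc (1 : ℝ) = ballBump (c i) (r i) x := (ballBump_eq_one hxi).symm
      _ ≤ ∑ j ∈ S, ballBump (c j) (r j) x :=
        Finset.single_le_sum (fun j _ => ballBump_nonneg (c j) (r j) x) hi
  · rw [indicator_of_notMem hx]
    exact ballBumpSum_nonneg c r S x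

def innerIndices (G : Set X) : Set ι :=
  {i | 0 < r i ∧ ball (c i) (2 * r i) ⊆ G}

lemma ballBumpSum_le_indicator {G : Set X} {S : Finset ι} (hS : ↑S ⊆ innerIndices c r G) :
    ballBumpSum c r S ≤ G.indicator 1 := by
  intro x
  by_cases hx : x ∈ G
  · rw [indicator_of_mem hx]
    exact min_le_left _ _
  · have hsum : ∑ i ∈ S, ballBump (c i) (r i) x = 0 :=
      Finset.sum_eq_zero fun i hi => ballBump_eq_zero (hS hi).1 fun hxi => hx ((hS hi).2 hxi)
    simp [ballBumpSum, hsum, hx]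

lemma subset_iUnion_innerIndices {D : Set X} (hD : Dense D) {G : Set X} (hG : IsOpen G) :
    G ⊆ ⋃ i ∈ innerIndices (fun t : D × ℚ => (t.1 : X)) (fun t => (t.2 : ℝ)) G,
      ball (i.1 : X) i.2 := by
  intro x hx
  obtain ⟨δ, hδ, hxδ⟩ := isOpen_iff.1 hG x hx
  obtain ⟨q, hq, hqδ⟩ := exists_rat_btwn (by positivity : (0 : ℝ) < δ / 3)
  obtain ⟨y, hyD, hxy⟩ := hD.exists_dist_lt x hq
  refine mem_iUnion₂.2 ⟨(⟨y, hyD⟩, q), ⟨hq, fun z hz => hxδ ?_⟩, ?_⟩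
  · have := dist_triangle_right z x y
    rw [mem_ball] at hz ⊢
    dsimp only at hz
    linarith
  · exact hxy

end Bumps

section Measure

variable {X : Type*} [MeasurableSpace X]

lemma measure_biUnion_le_of_forall_finset {ι : Type*} [Countable ι] {μ : Measure X} {T : Set ι}
    {B : ι → Set X} {a : ENNReal} (h : ∀ S : Finset ι, ↑S ⊆ T → μ (⋃ i ∈ S, B i) ≤ a) :
    μ (⋃ i ∈ T, B i) ≤ a := by
  classical
  have hunion : ⋃ i ∈ T, B i = ⋃ S ∈ {S : Finset ι | ↑S ⊆ T}, ⋃ i ∈ S, B i := by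
    refine Subset.antisymm (iUnion₂_subset fun i hi => ?_) (iUnion₂_subset fun S hS => ?_)
    · exact subset_biUnion_of_mem (u := fun S : Finset ι => ⋃ i ∈ S, B i)
        (show ↑({i} : Finset ι) ⊆ T by simpa using hi) |>.trans' (by simp)
    · exact biUnion_subset_biUnion_left hS
  have hdir : DirectedOn (Function.onFun (· ⊆ ·) fun S : Finset ι => ⋃ i ∈ S, B i)
      {S | ↑S ⊆ T} := fun S hS S' hS' => ⟨S ∪ S', by simp_all,
      biUnion_subset_biUnion_left (by simp), biUnion_subset_biUnion_left (by simp)⟩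
  rw [hunion, measure_biUnion_eq_iSup (to_countable _) hdir]
  exact iSup₂_le h

lemma measure_le_ofReal_integral {μ : Measure X} [IsFiniteMeasure μ] {U : Set X} {g : X → ℝ}
    (hU : MeasurableSet U) (hg : Integrable g μ) (hUg : U.indicator 1 ≤ g) :
    μ U ≤ ENNReal.ofReal (∫ x, g x ∂μ) :=
  calc μ U = ENNReal.ofReal (∫ x, U.indicator 1 x ∂μ) := by
        rw [integral_indicator_one hU, ofReal_measureReal]
    _ ≤ ENNReal.ofReal (∫ x, g x ∂μ) :=
        ENNReal.ofReal_le_ofReal (integral_mono ((integrable_const 1).indicator hU) hg hUg)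

lemma ofReal_integral_le_measure {μ : Measure X} [IsFiniteMeasure μ] {G : Set X} {g : X → ℝ}
    (hG : MeasurableSet G) (hg : Integrable g μ) (hgG : g ≤ G.indicator 1) :
    ENNReal.ofReal (∫ x, g x ∂μ) ≤ μ G :=
  calc ENNReal.ofReal (∫ x, g x ∂μ) ≤ ENNReal.ofReal (∫ x, G.indicator 1 x ∂μ) :=
        ENNReal.ofReal_le_ofReal (integral_mono hg ((integrable_const 1).indicator hG) hgG)
    _ = μ G := by rw [integral_indicator_one hG, ofReal_measureReal]

lemma measure_le_liminf_measure_of_tendsto_integral {μ : ℕ → Measure X}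
    [∀ n, IsFiniteMeasure (μ n)] {ν : Measure X} [IsFiniteMeasure ν] {U G : Set X} {g : X → ℝ}
    (hU : MeasurableSet U) (hG : MeasurableSet G) (hgν : Integrable g ν)
    (hgμ : ∀ n, Integrable g (μ n)) (hUg : U.indicator 1 ≤ g) (hgG : g ≤ G.indicator 1)
    (hlim : Tendsto (fun n => ∫ x, g x ∂μ n) atTop (𝓝 (∫ x, g x ∂ν))) :
    ν U ≤ atTop.liminf fun n => μ n G :=
  calc ν U ≤ ENNReal.ofReal (∫ x, g x ∂ν) := measure_le_ofReal_integral hU hgν hUg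
    _ = atTop.liminf fun n => ENNReal.ofReal (∫ x, g x ∂μ n) :=
        ((ENNReal.continuous_ofReal.tendsto _).comp hlim).liminf_eq.symm
    _ ≤ atTop.liminf fun n => μ n G :=
        liminf_le_liminf (.of_forall fun n => ofReal_integral_le_measure hG (hgμ n) hgG)

end Measure

section Varadarajan

variable {X : Type*} [PseudoMetricSpace X] [MeasurableSpace X] [OpensMeasurableSpace X]
  {ι : Type*} (c : ι → X) (r : ι → ℝ)

lemma integrable_ballBumpSum (μ : Measure X) [IsFiniteMeasure μ] (S : Finset ι) :
    Integrable (ballBumpSum c r S) μ :=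
  .of_bound (uniformContinuous_ballBumpSum c r S).continuous.aestronglyMeasurable 1
    (.of_forall fun x => abs_ballBumpSum_le_one c r S x)

lemma le_liminf_measure_of_tendsto_integral_ballBumpSum [Countable ι] {μ : ℕ → Measure X}
    [∀ n, IsFiniteMeasure (μ n)] {ν : Measure X} [IsFiniteMeasure ν] {G : Set X} (hG : IsOpen G)
    (hcover : G ⊆ ⋃ i ∈ innerIndices c r G, ball (c i) (r i))
    (hlim : ∀ S, Tendsto (fun n => ∫ x, ballBumpSum c r S x ∂μ n) atTop
      (𝓝 (∫ x, ballBumpSum c r S x ∂ν))) :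
    ν G ≤ atTop.liminf fun n => μ n G :=
  (measure_mono hcover).trans <| measure_biUnion_le_of_forall_finset fun S hS =>
    measure_le_liminf_measure_of_tendsto_integral
      (S.measurableSet_biUnion fun _ _ => measurableSet_ball) hG.measurableSet
      (integrable_ballBumpSum c r ν S) (fun n => integrable_ballBumpSum c r (μ n) S)
      (indicator_le_ballBumpSum c r S) (ballBumpSum_le_indicator c r hS) (hlim S)

end Varadarajan

/-- Varadarajan's lemma: on a separable metric space there is a countable family of
bounded uniformly continuous functions that determines weak convergence of Borel
probability measures. -/
theorem stmt_7 (X : Type*) [MetricSpace X] [TopologicalSpace.SeparableSpace X]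
    [MeasurableSpace X] [BorelSpace X] :
    ∃ g : ℕ → X → ℝ,
      (∀ i, UniformContinuous (g i) ∧ ∃ M : ℝ, ∀ x, |g i x| ≤ M) ∧
      ∀ (μ : ℕ → Measure X) (ν : Measure X),
        (∀ n, IsProbabilityMeasure (μ n)) → IsProbabilityMeasure ν →
        ((∀ f : X → ℝ, Continuous f → (∃ M : ℝ, ∀ x, |f x| ≤ M) →
            Tendsto (fun n => ∫ x, f x ∂(μ n)) atTop (𝓝 (∫ x, f x ∂ν)))
          ↔ (∀ i, Tendsto (fun n => ∫ x, g i x ∂(μ n)) atTop (𝓝 (∫ x, g i x ∂ν)))) := by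
  obtain ⟨D, hD_countable, hD⟩ := TopologicalSpace.exists_countable_dense X
  have := hD_countable.to_subtype
  let c : D × ℚ → X := fun t => t.1
  let r : D × ℚ → ℝ := fun t => t.2
  obtain ⟨e, he⟩ := exists_surjective_nat (Finset (D × ℚ))
  have hbound n x : |ballBumpSum c r (e n) x| ≤ 1 := abs_ballBumpSum_le_one c r (e n) x
  refine ⟨fun n => ballBumpSum c r (e n),
    fun n => ⟨uniformContinuous_ballBumpSum c r (e n), 1, hbound n⟩, fun μ ν hμ hν => ⟨?_, ?_⟩⟩
  · exact fun H n => H _ (uniformContinuous_ballBumpSum c r (e n)).continuous ⟨1, hbound n⟩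
  intro H f hf ⟨M, hM⟩
  have h_opens G (hG : IsOpen G) : ν G ≤ atTop.liminf fun n => μ n G :=
    le_liminf_measure_of_tendsto_integral_ballBumpSum c r hG (subset_iUnion_innerIndices hD hG)
      fun S => by obtain ⟨n, rfl⟩ := he S; exact H n
  exact BoundedContinuousFunction.tendsto_integral_of_forall_integral_le_liminf_integral
    (fun g hg => integral_le_liminf_integral_of_forall_isOpen_measure_le_liminf_measure hg h_opens)
    (.ofNormedAddCommGroup f hf M hM)
end

section
/- Let (X_n)_{n∈ℤ} be H-valued random variables bounded by K, and suppose there exist copies (X'_n), (X''_n) of the sequence and an event A with P(A) ≥ 1 − β such that: (X''_n) is independent of (X_n), E[‖X_j − X'_j‖ 1_A] ≤ 2a for j ∈ {0, j}, and E‖X'_0 − X''_0‖ ≤ 2a. Then |E⟨X_0, X_j⟩ − ⟨EX_0, EX_j⟩| ≤ 2K²β + 4Ka. -/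
open MeasureTheory
open scoped RealInnerProductSpace

/-!
Replace `E⟨X₀, Xⱼ⟩` by `E⟨X'₀, X'ⱼ⟩` (same joint law) and `⟨EX₀, EXⱼ⟩` by `E⟨X''₀, Xⱼ⟩`
(same law of the first factor, independence).  The difference of these two expectations
telescopes into `E⟨X'₀, X'ⱼ − Xⱼ⟩ + E⟨X'₀ − X''₀, Xⱼ⟩`; by Cauchy–Schwarz the first term is at
most `K E‖X'ⱼ − Xⱼ‖ ≤ K (2a + 2Kβ)`, splitting over `A` and `Aᶜ`, and the second at most `2Ka`.
-/

section

variable {Ω H : Type*} [MeasurableSpace Ω] {μ : Measure Ω}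
  [NormedAddCommGroup H] [InnerProductSpace ℝ H]

lemma abs_inner_sub_inner_le {x x' y y' : H} {K : ℝ} (hx : ‖x‖ ≤ K) (hy' : ‖y'‖ ≤ K) :
    |⟪x, y⟫ - ⟪x', y'⟫| ≤ K * ‖y - y'‖ + K * ‖x - x'‖ := by
  have hsplit : ⟪x, y⟫ - ⟪x', y'⟫ = ⟪x, y - y'⟫ + ⟪x - x', y'⟫ := by
    rw [inner_sub_right, inner_sub_left]
    ring
  calc |⟪x, y⟫ - ⟪x', y'⟫| ≤ |⟪x, y - y'⟫| + |⟪x - x', y'⟫| := hsplit ▸ abs_add_le _ _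
    _ ≤ ‖x‖ * ‖y - y'‖ + ‖x - x'‖ * ‖y'‖ :=
      add_le_add (abs_real_inner_le_norm _ _) (abs_real_inner_le_norm _ _)
    _ ≤ K * ‖y - y'‖ + ‖x - x'‖ * K := by gcongr
    _ = K * ‖y - y'‖ + K * ‖x - x'‖ := by ring

variable [IsFiniteMeasure μ]

lemma integrable_inner_of_bound {f g : Ω → H} {K : ℝ}
    (hf : AEStronglyMeasurable f μ) (hg : AEStronglyMeasurable g μ)
    (hfK : ∀ᵐ ω ∂μ, ‖f ω‖ ≤ K) (hgK : ∀ᵐ ω ∂μ, ‖g ω‖ ≤ K) :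
    Integrable (fun ω => ⟪f ω, g ω⟫) μ := by
  refine Integrable.of_bound (hf.inner hg) (K * K) ?_
  filter_upwards [hfK, hgK] with ω h1 h2
  exact (norm_inner_le_norm _ _).trans
    (mul_le_mul h1 h2 (norm_nonneg _) ((norm_nonneg _).trans h1))

lemma abs_integral_inner_sub_integral_inner_le {f f' g g' : Ω → H} {K : ℝ}
    (hf : AEStronglyMeasurable f μ) (hf' : AEStronglyMeasurable f' μ)
    (hg : AEStronglyMeasurable g μ) (hg' : AEStronglyMeasurable g' μ)
    (hfK : ∀ᵐ ω ∂μ, ‖f ω‖ ≤ K) (hf'K : ∀ᵐ ω ∂μ, ‖f' ω‖ ≤ K)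
    (hgK : ∀ᵐ ω ∂μ, ‖g ω‖ ≤ K) (hg'K : ∀ᵐ ω ∂μ, ‖g' ω‖ ≤ K) :
    |∫ ω, ⟪f ω, g ω⟫ ∂μ - ∫ ω, ⟪f' ω, g' ω⟫ ∂μ|
      ≤ K * ∫ ω, ‖g ω - g' ω‖ ∂μ + K * ∫ ω, ‖f ω - f' ω‖ ∂μ := by
  have hdg : Integrable (fun ω => ‖g ω - g' ω‖) μ :=
    ((Integrable.of_bound hg K hgK).sub (Integrable.of_bound hg' K hg'K)).norm
  have hdf : Integrable (fun ω => ‖f ω - f' ω‖) μ :=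
    ((Integrable.of_bound hf K hfK).sub (Integrable.of_bound hf' K hf'K)).norm
  rw [← integral_sub (integrable_inner_of_bound hf hg hfK hgK)
      (integrable_inner_of_bound hf' hg' hf'K hg'K),
    ← integral_const_mul K (fun ω => ‖g ω - g' ω‖), ← integral_const_mul K (fun ω => ‖f ω - f' ω‖),
    ← integral_add (hdg.const_mul K) (hdf.const_mul K), ← Real.norm_eq_abs]
  refine norm_integral_le_of_norm_le ((hdg.const_mul K).add (hdf.const_mul K)) ?_
  filter_upwards [hfK, hg'K] with ω h1 h2 using abs_inner_sub_inner_le h1 h2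

lemma integral_le_setIntegral_add_mul_measureReal_compl {g : Ω → ℝ} {C : ℝ} {A : Set Ω}
    (hA : MeasurableSet A) (hg : Integrable g μ) (hgC : ∀ᵐ ω ∂μ, g ω ≤ C) :
    ∫ ω, g ω ∂μ ≤ ∫ ω in A, g ω ∂μ + C * μ.real Aᶜ := by
  rw [← integral_add_compl hA hg]
  gcongr
  calc ∫ ω in Aᶜ, g ω ∂μ ≤ ∫ _ in Aᶜ, C ∂μ :=
        integral_mono_ae hg.restrict (integrable_const C) (ae_restrict_of_ae hgC)
    _ = C * μ.real Aᶜ := by rw [setIntegral_const, smul_eq_mul, mul_comm]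

end

theorem stmt_15_general
    {H : Type*} [NormedAddCommGroup H] [InnerProductSpace ℝ H] [CompleteSpace H]
    [SecondCountableTopology H] [MeasurableSpace H] [BorelSpace H]
    {Ω : Type*} [MeasurableSpace Ω] (μ : Measure Ω) [IsProbabilityMeasure μ]
    (X X' X'' : ℤ → Ω → H) (j : ℤ)
    (hmeas : ∀ i, Measurable (X i)) (hmeas' : ∀ i, Measurable (X' i))
    (hmeas'' : ∀ i, Measurable (X'' i))
    (K a β : ℝ) (hK : 0 ≤ K)
    (hbd : ∀ i, ∀ᵐ ω ∂μ, ‖X i ω‖ ≤ K)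
    (hbd' : ∀ i, ∀ᵐ ω ∂μ, ‖X' i ω‖ ≤ K)
    (hbd'' : ∀ i, ∀ᵐ ω ∂μ, ‖X'' i ω‖ ≤ K)
    -- (X'_0, X'_j) is a copy of (X_0, X_j)
    (hcopy : μ.map (fun ω => (X' 0 ω, X' j ω)) = μ.map (fun ω => (X 0 ω, X j ω)))
    -- X''_0 is a copy of X_0, independent of the sequence (X_n)
    (hcopy'' : μ.map (X'' 0) = μ.map (X 0))
    (hindep : ProbabilityTheory.IndepFun (X'' 0) (fun ω => (X 0 ω, X j ω)) μ)
    (A : Set Ω) (hA : MeasurableSet A) (hPA : (1 - β : ℝ) ≤ (μ A).toReal)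
    (happroxj : (∫ ω, Set.indicator A (fun ω' => ‖X j ω' - X' j ω'‖) ω ∂μ) ≤ 2 * a)
    (happrox'' : (∫ ω, ‖X' 0 ω - X'' 0 ω‖ ∂μ) ≤ 2 * a) :
    |(∫ ω, ⟪X 0 ω, X j ω⟫ ∂μ) - ⟪∫ ω, X 0 ω ∂μ, ∫ ω, X j ω ∂μ⟫|
      ≤ 2 * K ^ 2 * β + 4 * K * a := by
  have hcopy_inner : ∫ ω, ⟪X 0 ω, X j ω⟫ ∂μ = ∫ ω, ⟪X' 0 ω, X' j ω⟫ ∂μ :=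
    ((ProbabilityTheory.IdentDistrib.mk (((hmeas' 0).prodMk (hmeas' j)).aemeasurable)
      (((hmeas 0).prodMk (hmeas j)).aemeasurable) hcopy).comp
      continuous_inner.measurable).integral_eq.symm
  have hcopy_mean : ∫ ω, X'' 0 ω ∂μ = ∫ ω, X 0 ω ∂μ :=
    (ProbabilityTheory.IdentDistrib.mk (hmeas'' 0).aemeasurable (hmeas 0).aemeasurable
      hcopy'').integral_eq
  have hindep_inner : ∫ ω, ⟪X'' 0 ω, X j ω⟫ ∂μ = ⟪∫ ω, X 0 ω ∂μ, ∫ ω, X j ω ∂μ⟫ := by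
    rw [← hcopy_mean]
    exact (hindep.comp measurable_id measurable_snd).integral_bilin
      (Integrable.of_bound (hmeas'' 0).aestronglyMeasurable K (hbd'' 0))
      (Integrable.of_bound (hmeas j).aestronglyMeasurable K (hbd j)) (innerSL ℝ)
  have hPAc : μ.real Aᶜ ≤ β := by
    rw [probReal_compl_eq_one_sub hA, measureReal_def]
    linarith
  have hdist_j : ∫ ω, ‖X' j ω - X j ω‖ ∂μ ≤ 2 * a + 2 * K * β := by
    have hsetIntegral : ∫ ω in A, ‖X' j ω - X j ω‖ ∂μ ≤ 2 * a := by
      simpa only [integral_indicator hA, norm_sub_rev] using happroxj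
    calc ∫ ω, ‖X' j ω - X j ω‖ ∂μ ≤ ∫ ω in A, ‖X' j ω - X j ω‖ ∂μ + 2 * K * μ.real Aᶜ := by
          refine integral_le_setIntegral_add_mul_measureReal_compl hA ?_ ?_
          · exact ((Integrable.of_bound (hmeas' j).aestronglyMeasurable K (hbd' j)).sub
              (Integrable.of_bound (hmeas j).aestronglyMeasurable K (hbd j))).norm
          · filter_upwards [hbd' j, hbd j] with ω h1 h2
            linarith [norm_sub_le (X' j ω) (X j ω)]
      _ ≤ 2 * a + 2 * K * β := by gcongr
  rw [hcopy_inner, ← hindep_inner]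
  calc _ ≤ K * ∫ ω, ‖X' j ω - X j ω‖ ∂μ + K * ∫ ω, ‖X' 0 ω - X'' 0 ω‖ ∂μ :=
        abs_integral_inner_sub_integral_inner_le (hmeas' 0).aestronglyMeasurable
          (hmeas'' 0).aestronglyMeasurable (hmeas' j).aestronglyMeasurable
          (hmeas j).aestronglyMeasurable (hbd' 0) (hbd'' 0) (hbd' j) (hbd j)
    _ ≤ K * (2 * a + 2 * K * β) + K * (2 * a) := by gcongr
    _ = 2 * K ^ 2 * β + 4 * K * a := by ring

/-- Covariance inequality (Lemma 1, bounded case): given a coupling `(X', X'')` of the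
bounded sequence `(X_n)` with `X''` independent of `X`, an event `A` with
`P(A) ≥ 1 − β`, and approximation bounds `2a`, one has
`|E⟨X_0, X_j⟩ − ⟨EX_0, EX_j⟩| ≤ 2K²β + 4Ka`. -/
theorem stmt_15
    {H : Type*} [NormedAddCommGroup H] [InnerProductSpace ℝ H] [CompleteSpace H]
    [SecondCountableTopology H] [MeasurableSpace H] [BorelSpace H]
    {Ω : Type*} [MeasurableSpace Ω] (μ : Measure Ω) [IsProbabilityMeasure μ]
    (X X' X'' : ℤ → Ω → H) (j : ℤ)
    (hmeas : ∀ i, Measurable (X i)) (hmeas' : ∀ i, Measurable (X' i))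
    (hmeas'' : ∀ i, Measurable (X'' i))
    (K a β : ℝ) (hK : 0 ≤ K) (ha : 0 ≤ a) (hβ : 0 ≤ β)
    (hbd : ∀ i, ∀ᵐ ω ∂μ, ‖X i ω‖ ≤ K)
    (hbd' : ∀ i, ∀ᵐ ω ∂μ, ‖X' i ω‖ ≤ K)
    (hbd'' : ∀ i, ∀ᵐ ω ∂μ, ‖X'' i ω‖ ≤ K)
    -- (X'_0, X'_j) is a copy of (X_0, X_j)
    (hcopy : μ.map (fun ω => (X' 0 ω, X' j ω)) = μ.map (fun ω => (X 0 ω, X j ω)))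
    -- X''_0 is a copy of X_0, independent of the sequence (X_n)
    (hcopy'' : μ.map (X'' 0) = μ.map (X 0))
    (hindep : ProbabilityTheory.IndepFun (X'' 0) (fun ω => (X 0 ω, X j ω)) μ)
    (A : Set Ω) (hA : MeasurableSet A) (hPA : (1 - β : ℝ) ≤ (μ A).toReal)
    (happrox0 : (∫ ω, Set.indicator A (fun ω' => ‖X 0 ω' - X' 0 ω'‖) ω ∂μ) ≤ 2 * a)
    (happroxj : (∫ ω, Set.indicator A (fun ω' => ‖X j ω' - X' j ω'‖) ω ∂μ) ≤ 2 * a)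
    (happrox'' : (∫ ω, ‖X' 0 ω - X'' 0 ω‖ ∂μ) ≤ 2 * a) :
    |(∫ ω, ⟪X 0 ω, X j ω⟫ ∂μ) - ⟪∫ ω, X 0 ω ∂μ, ∫ ω, X j ω ∂μ⟫|
      ≤ 2 * K ^ 2 * β + 4 * K * a :=
  stmt_15_general μ X X' X'' j hmeas hmeas' hmeas'' K a β hK hbd hbd' hbd'' hcopy hcopy'' hindep A
    hA hPA happroxj happrox''
end
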